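/- Ratio lower bound for acceptance: suppose f(x^{k+1}) ≤ f(x^k) - Ψ_k + (L/2)‖u^{k+1} - u^k‖²_∞, m_k ≥ f(x^k), Ψ_k > 0, ‖u^{k+1} - u^k‖_∞ ≤ c·Δ for constants c, Δ, L > 0, and Ψ_k ≥ (Δ/δ)Ψ_δ for constants δ > 0, Ψ_δ > 0. Then the ratio ρ := (m_k - f(x^{k+1}))/Ψ_k satisfies ρ ≥ 1 - (Lδc²/(2Ψ_δ))·Δ. In particular, ρ ≥ ϱ whenever Δ ≤ 2(1-ϱ)Ψ_δ/(Lδc²), for any ϱ ∈ (0,1). -/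

import Mathlib

/-!
The actual reduction `m_k - f(x^{k+1})` falls short of the predicted reduction `Ψ_k` by at most
the quadratic error `(L/2)‖d‖² ≤ (L/2)c²Δ²`, so the ratio is at least `1 - Lc²Δ²/(2Ψ_k)`.
Since `Ψ_k` is bounded below linearly in `Δ`, this error term is `O(Δ)`.
-/

theorem one_sub_div_le_ratio_of_decrease {f f' m Ψ L r : ℝ}
    (hdec : f' ≤ f - Ψ + L / 2 * r ^ 2) (hm : f ≤ m) (hΨ : 0 < Ψ) :
    1 - L * r ^ 2 / (2 * Ψ) ≤ (m - f') / Ψ := by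
  have hsplit : 1 - L * r ^ 2 / (2 * Ψ) = (Ψ - L / 2 * r ^ 2) / Ψ := by
    field_simp
  rw [hsplit]
  exact div_le_div_of_nonneg_right (by linarith) hΨ.le

theorem quadratic_error_div_le_linear {Ψ L r c Δ δ Ψδ : ℝ}
    (hL : 0 ≤ L) (hΔ : 0 < Δ) (hδ : 0 < δ) (hΨδ : 0 < Ψδ)
    (hr : 0 ≤ r) (hrΔ : r ≤ c * Δ) (hΨ : Δ / δ * Ψδ ≤ Ψ) :
    L * r ^ 2 / (2 * Ψ) ≤ L * δ * c ^ 2 / (2 * Ψδ) * Δ := by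
  have hlow : 0 < Δ / δ * Ψδ := by positivity
  calc L * r ^ 2 / (2 * Ψ)
      ≤ L * (c * Δ) ^ 2 / (2 * (Δ / δ * Ψδ)) := by
        gcongr
    _ = L * δ * c ^ 2 / (2 * Ψδ) * Δ := by
        field_simp

/-- Ratio lower bound for acceptance: the acceptance ratio tends to `1`
as the trust-region radius shrinks. The step `d = u^{k+1} - u^k` lives in
`Fin m → ℝ` with the sup-norm. -/
theorem stmt_10 {m : ℕ} (fk fk1 mk Ψk L c Δ δ Ψδ : ℝ) (d : Fin m → ℝ)
    (hL : 0 < L) (hc : 0 < c) (hΔ : 0 < Δ) (hδ : 0 < δ) (hΨδ : 0 < Ψδ)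
    (h1 : fk1 ≤ fk - Ψk + L / 2 * ‖d‖ ^ 2)
    (h2 : fk ≤ mk) (hΨk : 0 < Ψk)
    (h3 : ‖d‖ ≤ c * Δ)
    (h4 : (Δ / δ) * Ψδ ≤ Ψk) :
    1 - (L * δ * c ^ 2 / (2 * Ψδ)) * Δ ≤ (mk - fk1) / Ψk ∧
      ∀ ϱ ∈ Set.Ioo (0 : ℝ) 1,
        Δ ≤ 2 * (1 - ϱ) * Ψδ / (L * δ * c ^ 2) → ϱ ≤ (mk - fk1) / Ψk := by
  have hratio : 1 - (L * δ * c ^ 2 / (2 * Ψδ)) * Δ ≤ (mk - fk1) / Ψk :=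
    (one_sub_div_le_ratio_of_decrease h1 h2 hΨk).trans' <| sub_le_sub_left
      (quadratic_error_div_le_linear hL.le hΔ hδ hΨδ (norm_nonneg d) h3 h4) 1
  refine ⟨hratio, fun ϱ _ hsmall => ?_⟩
  have hrate : 0 < L * δ * c ^ 2 / (2 * Ψδ) := by positivity
  have herror : L * δ * c ^ 2 / (2 * Ψδ) * Δ ≤ 1 - ϱ := by
    rw [mul_comm, ← le_div_iff₀ hrate, div_div_eq_mul_div]
    exact hsmall.trans_eq (by ring)
  linarith
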